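/- The word-reversal identity for characteristic sequences: if {k_i}, {k'_i}, {k̂_i} are the rational characteristic sequences for (n,l), (n',l'), (n+n',l+l') respectively, with l/n < l'/n' and nl' − n'l = 1, then the finite word (k̂_1, ..., k̂_{n+n'-2}) equals both (k_1,...,k_{n-2}, 1, 0, k'_1,...,k'_{n'-2}) and (k'_1,...,k'_{n'-2}, 0, 1, k_1,...,k_{n-2}). -/
import Mathlib


/-- The rational characteristic sequence with respect to `(n, l)`:
`k_m = ⌊(m+1)l/n⌋ - ⌊ml/n⌋` for `m ∈ ℤ`. -/
def charSeq (n l : ℕ) (m : ℤ) : ℤ :=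
  Int.fdiv ((m + 1) * l) n - Int.fdiv (m * l) n

private lemma ediv_eq_of_bounds {a b q : ℤ} (hb : 0 < b) (h1 : b * q ≤ a)
    (h2 : a < b * (q + 1)) : a / b = q := by
  have ha : a = (a - b * q) + q * b := by ring
  rw [ha, Int.add_mul_ediv_right _ _ hb.ne',
    Int.ediv_eq_zero_of_lt (by linarith) (by linarith), zero_add]

private lemma ediv_sub_one {a n : ℤ} (hn : 0 < n) (h : ¬ n ∣ a) : (a - 1) / n = a / n := by
  have h1 := Int.mul_ediv_add_emod a n
  have hr0 : 0 ≤ a % n := Int.emod_nonneg _ hn.ne'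
  have hr1 : a % n < n := Int.emod_lt_of_pos _ hn
  have hrne : a % n ≠ 0 := fun hc => h (Int.dvd_of_emod_eq_zero hc)
  apply ediv_eq_of_bounds hn <;> [linarith [show 1 ≤ a % n by omega]; linarith]

private lemma lemA {n l n' l' : ℤ} (hn : 0 < n) (hN : 0 < n + n')
    (hfarey : n * l' - n' * l = 1) (m : ℤ) (hm0 : 0 ≤ m) (hm : m ≤ n + n' - 1) :
    (m * (l + l')) / (n + n') = (m * l) / n := by
  have h1 := Int.mul_ediv_add_emod (m * l) n
  have hr0 : 0 ≤ m * l % n := Int.emod_nonneg _ hn.ne'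
  have hr1 : m * l % n < n := Int.emod_lt_of_pos _ hn
  have key2 : n * (m * (l + l')) =
      n * (n + n') * (m * l / n) + (m * l % n) * (n + n') + m := by
    linear_combination m * hfarey - (n + n') * h1
  apply ediv_eq_of_bounds hN
  · have h : n * ((n + n') * (m * l / n)) ≤ n * (m * (l + l')) := by
      nlinarith [mul_nonneg hr0 hN.le]
    exact le_of_mul_le_mul_left h hn
  · have h : n * (m * (l + l')) < n * ((n + n') * (m * l / n + 1)) := by
      nlinarith [mul_nonneg (show (0:ℤ) ≤ n - 1 - m * l % n by linarith) hN.le]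
    exact lt_of_mul_lt_mul_left h hn.le

private lemma lemB {n l n' l' : ℤ} (hn' : 0 < n') (hN : 0 < n + n')
    (hfarey : n * l' - n' * l = 1) (m : ℤ) (hm0 : 1 ≤ m) (hm : m ≤ n + n' - 1) :
    (m * (l + l')) / (n + n') = (m * l' - 1) / n' := by
  have h1 := Int.mul_ediv_add_emod (m * l' - 1) n'
  have hr0 : 0 ≤ (m * l' - 1) % n' := Int.emod_nonneg _ hn'.ne'
  have hr1 : (m * l' - 1) % n' < n' := Int.emod_lt_of_pos _ hn'
  have key2 : n' * (m * (l + l')) =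
      n' * (n + n') * ((m * l' - 1) / n') + ((m * l' - 1) % n') * (n + n')
        + (n + n' - m) := by
    linear_combination (-m) * hfarey - (n + n') * h1
  apply ediv_eq_of_bounds hN
  · have h : n' * ((n + n') * ((m * l' - 1) / n')) ≤ n' * (m * (l + l')) := by
      nlinarith [mul_nonneg hr0 hN.le]
    exact le_of_mul_le_mul_left h hn'
  · have h : n' * (m * (l + l')) < n' * ((n + n') * ((m * l' - 1) / n' + 1)) := by
      nlinarith [mul_nonneg (show (0:ℤ) ≤ n' - 1 - (m * l' - 1) % n' by linarith) hN.le]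
    exact lt_of_mul_lt_mul_left h hn'.le

private lemma not_dvd_mul {n l : ℕ} (hgcd : Nat.gcd n l = 1) {j : ℤ}
    (h : ¬ (n:ℤ) ∣ j) : ¬ (n:ℤ) ∣ j * l := by
  intro hd
  exact h ((Int.isCoprime_iff_gcd_eq_one.2
    (by rw [Int.gcd_natCast_natCast, hgcd])).dvd_of_dvd_mul_right hd)

private lemma charSeq_eq (n l : ℕ) (m : ℤ) :
    charSeq n l m = ((m + 1) * l) / n - (m * l) / n := by
  unfold charSeq
  rw [Int.fdiv_eq_ediv_of_nonneg _ (Int.natCast_nonneg n), Int.fdiv_eq_ediv_of_nonneg _ (Int.natCast_nonneg n)]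

/-- Word-reversal identity: the finite word `(k̂_1, …, k̂_{n+n'-2})` of the
characteristic sequence of `(n+n', l+l')` equals both
`(k_1,…,k_{n-2}, 1, 0, k'_1,…,k'_{n'-2})` and
`(k'_1,…,k'_{n'-2}, 0, 1, k_1,…,k_{n-2})`. -/
theorem charSeq_word_reversal (n l n' l' : ℕ)
    (hn : 2 ≤ n) (hl : l < n) (hgcd : Nat.gcd n l = 1)
    (hn' : 2 ≤ n') (hl' : l' < n') (hgcd' : Nat.gcd n' l' = 1)
    (hfrac : (l : ℚ) / n < (l' : ℚ) / n')
    (hfarey : (n : ℤ) * l' - (n' : ℤ) * l = 1)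
    (m : ℕ) (hm1 : 1 ≤ m) (hm2 : m ≤ n + n' - 2) :
    (charSeq (n + n') (l + l') m =
      if m ≤ n - 2 then charSeq n l m
      else if m = n - 1 then 1
      else if m = n then 0
      else charSeq n' l' ((m : ℤ) - n)) ∧
    (charSeq (n + n') (l + l') m =
      if m ≤ n' - 2 then charSeq n' l' m
      else if m = n' - 1 then 0
      else if m = n' then 1
      else charSeq n l ((m : ℤ) - n')) := by
  have hl0 : 1 ≤ l := by
    rcases Nat.eq_zero_or_pos l with h | h
    · subst h; rw [Nat.gcd_zero_right] at hgcd; omega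
    · exact h
  have hl'0 : 1 ≤ l' := by
    rcases Nat.eq_zero_or_pos l' with h | h
    · subst h; rw [Nat.gcd_zero_right] at hgcd'; omega
    · exact h
  have hnpos : (0:ℤ) < n := by omega
  have hn'pos : (0:ℤ) < n' := by omega
  have hnne : (n:ℤ) ≠ 0 := hnpos.ne'
  have hn'ne : (n':ℤ) ≠ 0 := hn'pos.ne'
  have hNpos : (0:ℤ) < (n:ℤ) + n' := by omega
  constructor
  · split_ifs with h1 h2 h3
    · -- m ≤ n - 2
      rw [charSeq_eq, charSeq_eq]
      push_cast
      rw [lemA hnpos hNpos hfarey ((m:ℤ) + 1) (by omega) (by omega),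
          lemA hnpos hNpos hfarey (m:ℤ) (by omega) (by omega)]
    · -- m = n - 1
      have hb : (m:ℤ) = (n:ℤ) - 1 := by omega
      rw [charSeq_eq]
      push_cast
      rw [lemA hnpos hNpos hfarey ((m:ℤ) + 1) (by omega) (by omega),
          lemA hnpos hNpos hfarey (m:ℤ) (by omega) (by omega), hb]
      rw [show ((n:ℤ) - 1 + 1) * l = 0 + (l:ℤ) * n by ring,
          show ((n:ℤ) - 1) * l = ((n:ℤ) - l) + ((l:ℤ) - 1) * n by ring,
          Int.add_mul_ediv_right _ _ hnne, Int.add_mul_ediv_right _ _ hnne,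
          Int.ediv_eq_zero_of_lt (by omega) (by omega),
          Int.ediv_eq_zero_of_lt (by omega) (by omega)]
      ring
    · -- m = n
      have hb : (m:ℤ) = (n:ℤ) := by omega
      rw [charSeq_eq]
      push_cast
      rw [lemA hnpos hNpos hfarey ((m:ℤ) + 1) (by omega) (by omega),
          lemA hnpos hNpos hfarey (m:ℤ) (by omega) (by omega), hb]
      rw [show ((n:ℤ) + 1) * l = (l:ℤ) + (l:ℤ) * n by ring,
          show (n:ℤ) * l = 0 + (l:ℤ) * n by ring,
          Int.add_mul_ediv_right _ _ hnne, Int.add_mul_ediv_right _ _ hnne,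
          Int.ediv_eq_zero_of_lt (by omega) (by omega),
          Int.ediv_eq_zero_of_lt (by omega) (by omega)]
      ring
    · -- n + 1 ≤ m ≤ n + n' - 2
      have hb : (n:ℤ) + 1 ≤ (m:ℤ) := by omega
      rw [charSeq_eq, charSeq_eq]
      push_cast
      rw [lemB hn'pos hNpos hfarey ((m:ℤ) + 1) (by omega) (by omega),
          lemB hn'pos hNpos hfarey (m:ℤ) (by omega) (by omega)]
      rw [show ((m:ℤ) + 1) * l' - 1 = ((m:ℤ) - n + 1) * l' + (l:ℤ) * n' by
            linear_combination hfarey,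
          show (m:ℤ) * l' - 1 = ((m:ℤ) - n) * l' + (l:ℤ) * n' by
            linear_combination hfarey,
          Int.add_mul_ediv_right _ _ hn'ne, Int.add_mul_ediv_right _ _ hn'ne]
      ring
  · split_ifs with h1 h2 h3
    · -- m ≤ n' - 2
      have hd1 : ¬ (n':ℤ) ∣ ((m:ℤ) + 1) * l' := by
        refine not_dvd_mul hgcd' ?_
        intro hd
        have := Int.le_of_dvd (by omega) hd
        omega
      have hd2 : ¬ (n':ℤ) ∣ (m:ℤ) * l' := by
        refine not_dvd_mul hgcd' ?_
        intro hd
        have := Int.le_of_dvd (by omega) hd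
        omega
      rw [charSeq_eq, charSeq_eq]
      push_cast
      rw [lemB hn'pos hNpos hfarey ((m:ℤ) + 1) (by omega) (by omega),
          lemB hn'pos hNpos hfarey (m:ℤ) (by omega) (by omega),
          ediv_sub_one hn'pos hd1, ediv_sub_one hn'pos hd2]
    · -- m = n' - 1
      have hb : (m:ℤ) = (n':ℤ) - 1 := by omega
      rw [charSeq_eq]
      push_cast
      rw [lemB hn'pos hNpos hfarey ((m:ℤ) + 1) (by omega) (by omega),
          lemB hn'pos hNpos hfarey (m:ℤ) (by omega) (by omega), hb]
      rw [show ((n':ℤ) - 1 + 1) * l' - 1 = ((n':ℤ) - 1) + ((l':ℤ) - 1) * n' by ring,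
          show ((n':ℤ) - 1) * l' - 1 = ((n':ℤ) - l' - 1) + ((l':ℤ) - 1) * n' by ring,
          Int.add_mul_ediv_right _ _ hn'ne, Int.add_mul_ediv_right _ _ hn'ne,
          Int.ediv_eq_zero_of_lt (by omega) (by omega),
          Int.ediv_eq_zero_of_lt (by omega) (by omega)]
      ring
    · -- m = n'
      have hb : (m:ℤ) = (n':ℤ) := by omega
      rw [charSeq_eq]
      push_cast
      rw [lemB hn'pos hNpos hfarey ((m:ℤ) + 1) (by omega) (by omega),
          lemB hn'pos hNpos hfarey (m:ℤ) (by omega) (by omega), hb]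
      rw [show ((n':ℤ) + 1) * l' - 1 = ((l':ℤ) - 1) + (l':ℤ) * n' by ring,
          show (n':ℤ) * l' - 1 = ((n':ℤ) - 1) + ((l':ℤ) - 1) * n' by ring,
          Int.add_mul_ediv_right _ _ hn'ne, Int.add_mul_ediv_right _ _ hn'ne,
          Int.ediv_eq_zero_of_lt (by omega) (by omega),
          Int.ediv_eq_zero_of_lt (by omega) (by omega)]
      ring
    · -- n' + 1 ≤ m ≤ n + n' - 2
      have hb : (n':ℤ) + 1 ≤ (m:ℤ) := by omega
      have hd1 : ¬ (n:ℤ) ∣ ((m:ℤ) - n' + 1) * l := by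
        refine not_dvd_mul hgcd ?_
        intro hd
        have := Int.le_of_dvd (by omega) hd
        omega
      have hd2 : ¬ (n:ℤ) ∣ ((m:ℤ) - n') * l := by
        refine not_dvd_mul hgcd ?_
        intro hd
        have := Int.le_of_dvd (by omega) hd
        omega
      rw [charSeq_eq, charSeq_eq]
      push_cast
      rw [lemA hnpos hNpos hfarey ((m:ℤ) + 1) (by omega) (by omega),
          lemA hnpos hNpos hfarey (m:ℤ) (by omega) (by omega)]
      rw [show ((m:ℤ) + 1) * l = (((m:ℤ) - n' + 1) * l - 1) + (l':ℤ) * n by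
            linear_combination -hfarey,
          show (m:ℤ) * l = (((m:ℤ) - n') * l - 1) + (l':ℤ) * n by
            linear_combination -hfarey,
          Int.add_mul_ediv_right _ _ hnne, Int.add_mul_ediv_right _ _ hnne,
          ediv_sub_one hnpos hd1, ediv_sub_one hnpos hd2]
      ring
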